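/- Under the same hypotheses as the previous statement (A has RIPL of order (s,M) with δ_{s,M} < 1; x' is (κs,M)-sparse; ‖P_Ξ x − x'‖₂ ≤ τ‖A P_{Ξ^c} x + e‖₂ + λ, Ξ the union of the sets of the 2s_i largest entries of x per level), there exist constants C_{κ,τ}, D_{κ,τ} > 0 depending only on κ, τ, and E_κ = √(2+κ), such that ‖x − x'‖_{ℓ¹_w} ≤ C_{κ,τ} (√ζ/√ξ) σ_{s,M}(x)_{ℓ¹_w} + D_{κ,τ} √ζ ‖e‖₂ + E_κ √ζ λ, where ζ = Σ_{i=1}^r (w^{(i)})² s_i and ξ = min_i (w^{(i)})² s_i. -/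

import Mathlib

noncomputable section

open scoped BigOperators Classical

namespace SIL

/-- The index set of level `k` (0-indexed): indices `i` with `M k ≤ i < M (k+1)`. -/
def level (N : ℕ) (M : ℕ → ℕ) (k : ℕ) : Finset (Fin N) :=
  Finset.univ.filter fun i => M k ≤ (i : ℕ) ∧ (i : ℕ) < M (k + 1)

/-- Validity of the sparsity levels `0 = M₀ < M₁ < ⋯ < M_r = N`. -/
def LevelsOK (N r : ℕ) (M : ℕ → ℕ) : Prop :=
  M 0 = 0 ∧ M r = N ∧ ∀ k < r, M k < M (k + 1)

/-- Support of a vector, as a finset. -/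
def supp {N : ℕ} (x : Fin N → ℂ) : Finset (Fin N) :=
  Finset.univ.filter fun i => x i ≠ 0

/-- An `(s,M)`-sparse index set: at most `s k` indices in each level `k`. -/
def SparseSet (N r : ℕ) (M s : ℕ → ℕ) (Δ : Finset (Fin N)) : Prop :=
  ∀ k < r, (Δ ∩ level N M k).card ≤ s k

/-- An `(s,M)`-sparse in levels vector. -/
def Sparse {N : ℕ} (r : ℕ) (M s : ℕ → ℕ) (x : Fin N → ℂ) : Prop :=
  SparseSet N r M s (supp x)

/-- Squared ℓ² norm. -/
def n2sq {ι : Type*} [Fintype ι] (x : ι → ℂ) : ℝ := ∑ i, ‖x i‖ ^ 2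

/-- ℓ² norm. -/
def n2 {ι : Type*} [Fintype ι] (x : ι → ℂ) : ℝ := Real.sqrt (n2sq x)

/-- Weighted ℓ¹ norm. -/
def wn1 {ι : Type*} [Fintype ι] (w : ι → ℝ) (x : ι → ℂ) : ℝ := ∑ i, w i * ‖x i‖

/-- Standard inner product `⟨x,y⟩ = ∑ xᵢ conj(yᵢ)`. -/
def inr {ι : Type*} [Fintype ι] (x y : ι → ℂ) : ℂ := ∑ i, x i * star (y i)

/-- Coordinate projection onto an index set. -/
def proj {N : ℕ} (Δ : Finset (Fin N)) (x : Fin N → ℂ) : Fin N → ℂ :=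
  fun i => if i ∈ Δ then x i else 0

/-- The two-sided restricted isometry-in-levels inequality with constant `δ`. -/
def RIPBound {m N : ℕ} (A : Matrix (Fin m) (Fin N) ℂ) (r : ℕ) (M s : ℕ → ℕ) (δ : ℝ) : Prop :=
  ∀ x : Fin N → ℂ, Sparse r M s x →
    (1 - δ) * n2sq x ≤ n2sq (A.mulVec x) ∧ n2sq (A.mulVec x) ≤ (1 + δ) * n2sq x

/-- The restricted isometry constant in levels `δ_{s,M}`: the smallest `δ ≥ 0`
satisfying the RIP-in-levels inequalities. -/
def ricl {m N : ℕ} (A : Matrix (Fin m) (Fin N) ℂ) (r : ℕ) (M s : ℕ → ℕ) : ℝ :=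
  sInf {δ : ℝ | 0 ≤ δ ∧ RIPBound A r M s δ}

/-- Best `(s,M)`-term approximation error in the weighted ℓ¹ norm. -/
def bestApprox {N : ℕ} (r : ℕ) (M s : ℕ → ℕ) (w : Fin N → ℝ) (x : Fin N → ℂ) : ℝ :=
  sInf {t : ℝ | ∃ z : Fin N → ℂ, Sparse r M s z ∧ t = wn1 w (x - z)}

/-- `ζ = ∑ₖ (w^{(k)})² sₖ`. -/
def zeta (r : ℕ) (s : ℕ → ℕ) (wl : ℕ → ℝ) : ℝ :=
  ∑ k ∈ Finset.range r, wl k ^ 2 * (s k : ℝ)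

/-- `ξ = minₖ (w^{(k)})² sₖ`. -/
def xiMin (r : ℕ) (s : ℕ → ℕ) (wl : ℕ → ℝ) : ℝ :=
  if h : (Finset.range r).Nonempty then (Finset.range r).inf' h fun k => wl k ^ 2 * (s k : ℝ)
  else 0

/-- `T` is a set collecting, within each level `k`, (the indices of) `s k`
largest-in-absolute-value entries of `z` (or all of the level if it is smaller). -/
def IsTopSet {N : ℕ} (r : ℕ) (M s : ℕ → ℕ) (z : Fin N → ℂ) (T : Finset (Fin N)) : Prop :=
  (∀ k < r, (T ∩ level N M k).card = min (s k) (level N M k).card) ∧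
  (∀ k < r, ∀ i ∈ T ∩ level N M k, ∀ j ∈ level N M k \ T, ‖z j‖ ≤ ‖z i‖)

/-- `h` is a hard thresholding in levels `H_{s,M}(z)` of `z`. -/
def IsThresh {N : ℕ} (r : ℕ) (M s : ℕ → ℕ) (z h : Fin N → ℂ) : Prop :=
  ∃ T : Finset (Fin N), IsTopSet r M s z T ∧ h = proj T z

/-- `X` is a sequence of IHTL iterates with data `(A, y)` and sparsities `(s, M)`. -/
def IHTLSeq {m N : ℕ} (A : Matrix (Fin m) (Fin N) ℂ) (r : ℕ) (M s : ℕ → ℕ)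
    (y : Fin m → ℂ) (X : ℕ → Fin N → ℂ) : Prop :=
  ∀ n, IsThresh r M s (X n + A.conjTranspose.mulVec (y - A.mulVec (X n))) (X (n + 1))

/-- `X` is a sequence of CoSaMPL iterates with data `(A, y)` and sparsities `(s, M)`. -/
def CoSaMPLSeq {m N : ℕ} (A : Matrix (Fin m) (Fin N) ℂ) (r : ℕ) (M s : ℕ → ℕ)
    (y : Fin m → ℂ) (X : ℕ → Fin N → ℂ) : Prop :=
  ∀ n, ∃ (T : Finset (Fin N)) (u : Fin N → ℂ),
    IsTopSet r M (fun k => 2 * s k) (A.conjTranspose.mulVec (y - A.mulVec (X n))) T ∧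
    supp u ⊆ supp (X n) ∪ T ∧
    (∀ z : Fin N → ℂ, supp z ⊆ supp (X n) ∪ T → n2 (y - A.mulVec u) ≤ n2 (y - A.mulVec z)) ∧
    IsThresh r M s u (X (n + 1))

/-! ### Auxiliary lemmas -/

section Aux

lemma n2sq_nonneg {ι : Type*} [Fintype ι] (x : ι → ℂ) : 0 ≤ n2sq x :=
  Finset.sum_nonneg fun i _ => by positivity

lemma n2_nonneg {ι : Type*} [Fintype ι] (x : ι → ℂ) : 0 ≤ n2 x := Real.sqrt_nonneg _

lemma n2_eq_norm {ι : Type*} [Fintype ι] (x : ι → ℂ) :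
    n2 x = ‖(WithLp.equiv 2 (ι → ℂ)).symm x‖ := by
  rw [n2, n2sq, EuclideanSpace.norm_eq]; rfl

lemma n2_add_le {ι : Type*} [Fintype ι] (x y : ι → ℂ) : n2 (x + y) ≤ n2 x + n2 y := by
  rw [n2_eq_norm, n2_eq_norm, n2_eq_norm]
  have h : (WithLp.equiv 2 (ι → ℂ)).symm (x + y) =
      (WithLp.equiv 2 (ι → ℂ)).symm x + (WithLp.equiv 2 (ι → ℂ)).symm y := rfl
  rw [h]; exact norm_add_le _ _

lemma n2_zero {ι : Type*} [Fintype ι] : n2 (0 : ι → ℂ) = 0 := by simp [n2, n2sq]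

lemma n2_mono {ι : Type*} [Fintype ι] {x y : ι → ℂ} (h : n2sq x ≤ n2sq y) : n2 x ≤ n2 y :=
  Real.sqrt_le_sqrt h

lemma n2_sum_le {ι β : Type*} [Fintype ι] (S : Finset β) (f : β → ι → ℂ) :
    n2 (∑ j ∈ S, f j) ≤ ∑ j ∈ S, n2 (f j) := by
  classical
  induction S using Finset.induction with
  | empty => simp [n2_zero]
  | insert _ _ h ih =>
    rw [Finset.sum_insert h, Finset.sum_insert h]
    exact le_trans (n2_add_le _ _) (by linarith)

lemma mulVec_sum {m n : ℕ} (A : Matrix (Fin m) (Fin n) ℂ) {β : Type*} (S : Finset β)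
    (f : β → Fin n → ℂ) : A.mulVec (∑ j ∈ S, f j) = ∑ j ∈ S, A.mulVec (f j) := by
  classical
  induction S using Finset.induction with
  | empty => simp [Matrix.mulVec_zero]
  | insert _ _ h ih => rw [Finset.sum_insert h, Finset.sum_insert h, Matrix.mulVec_add, ih]

lemma n2sq_proj {N : ℕ} (c : Finset (Fin N)) (x : Fin N → ℂ) :
    n2sq (proj c x) = ∑ i ∈ c, ‖x i‖ ^ 2 := by
  rw [n2sq, ← Finset.sum_subset (Finset.subset_univ c) (fun i _ hi => by simp [proj, hi])]
  exact Finset.sum_congr rfl fun i hi => by simp [proj, hi]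

lemma proj_empty {N : ℕ} (x : Fin N → ℂ) : proj (∅ : Finset (Fin N)) x = 0 := by
  funext i; simp [proj]

lemma n2_proj_le {N : ℕ} (c : Finset (Fin N)) (x : Fin N → ℂ) (t : ℝ) (ht0 : 0 ≤ t)
    (ht : ∀ i ∈ c, ‖x i‖ ≤ t) : n2 (proj c x) ≤ Real.sqrt c.card * t := by
  have h1 : n2sq (proj c x) ≤ (c.card : ℝ) * t ^ 2 := by
    rw [n2sq_proj]
    calc ∑ i ∈ c, ‖x i‖ ^ 2 ≤ ∑ _i ∈ c, t ^ 2 :=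
          Finset.sum_le_sum fun i hi => pow_le_pow_left₀ (norm_nonneg _) (ht i hi) 2
      _ = (c.card : ℝ) * t ^ 2 := by rw [Finset.sum_const, nsmul_eq_mul]
  calc n2 (proj c x) ≤ Real.sqrt ((c.card : ℝ) * t ^ 2) := Real.sqrt_le_sqrt h1
    _ = Real.sqrt c.card * t := by
        rw [Real.sqrt_mul (by positivity), Real.sqrt_sq ht0]

/-- The RIP-bound set is nonempty (with a crude Frobenius-type constant). -/
lemma ripbound_exists {m N : ℕ} (A : Matrix (Fin m) (Fin N) ℂ) (r : ℕ) (M s : ℕ → ℕ) :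
    RIPBound A r M s (1 + ∑ i, ∑ j, ‖A i j‖ ^ 2) := by
  intro x _
  have hF : (0 : ℝ) ≤ ∑ i, ∑ j, ‖A i j‖ ^ 2 := by positivity
  constructor
  · nlinarith [n2sq_nonneg x, n2sq_nonneg (A.mulVec x)]
  · have key : ∀ i, ‖A.mulVec x i‖ ^ 2 ≤ (∑ j, ‖A i j‖ ^ 2) * n2sq x := by
      intro i
      have h1 : ‖A.mulVec x i‖ ≤ ∑ j, ‖A i j‖ * ‖x j‖ := by
        calc ‖A.mulVec x i‖ = ‖∑ j, A i j * x j‖ := by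
              simp [Matrix.mulVec, dotProduct]
          _ ≤ ∑ j, ‖A i j * x j‖ := norm_sum_le _ _
          _ = ∑ j, ‖A i j‖ * ‖x j‖ := by simp [norm_mul]
      have h2 : (∑ j, ‖A i j‖ * ‖x j‖) ≤
          Real.sqrt (∑ j, ‖A i j‖ ^ 2) * Real.sqrt (∑ j, ‖x j‖ ^ 2) :=
        Real.sum_mul_le_sqrt_mul_sqrt _ _ _
      calc ‖A.mulVec x i‖ ^ 2
          ≤ (Real.sqrt (∑ j, ‖A i j‖ ^ 2) * Real.sqrt (∑ j, ‖x j‖ ^ 2)) ^ 2 :=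
            pow_le_pow_left₀ (norm_nonneg _) (h1.trans h2) 2
        _ = (∑ j, ‖A i j‖ ^ 2) * n2sq x := by
            rw [mul_pow, Real.sq_sqrt (by positivity), Real.sq_sqrt (by positivity)]; rfl
    calc n2sq (A.mulVec x) = ∑ i, ‖A.mulVec x i‖ ^ 2 := rfl
      _ ≤ ∑ i, (∑ j, ‖A i j‖ ^ 2) * n2sq x := Finset.sum_le_sum fun i _ => key i
      _ = (∑ i, ∑ j, ‖A i j‖ ^ 2) * n2sq x := by rw [← Finset.sum_mul]
      _ ≤ (1 + (1 + ∑ i, ∑ j, ‖A i j‖ ^ 2)) * n2sq x := by nlinarith [n2sq_nonneg x]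

lemma exists_rip {m N : ℕ} (A : Matrix (Fin m) (Fin N) ℂ) {r : ℕ} {M s : ℕ → ℕ}
    (h : ricl A r M s < 1) : ∃ δ : ℝ, 0 ≤ δ ∧ δ < 1 ∧ RIPBound A r M s δ := by
  have hne : {δ : ℝ | 0 ≤ δ ∧ RIPBound A r M s δ}.Nonempty :=
    ⟨1 + ∑ i, ∑ j, ‖A i j‖ ^ 2, by positivity, ripbound_exists A r M s⟩
  obtain ⟨δ, hδ, hlt⟩ := exists_lt_of_csInf_lt hne h
  exact ⟨δ, hδ.1, hlt, hδ.2⟩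

lemma rip_sqrt_two {m N : ℕ} {A : Matrix (Fin m) (Fin N) ℂ} {r : ℕ} {M s : ℕ → ℕ} {δ : ℝ}
    (hδ : δ < 1) (hA : RIPBound A r M s δ) {z : Fin N → ℂ} (hz : Sparse r M s z) :
    n2 (A.mulVec z) ≤ Real.sqrt 2 * n2 z := by
  have h1 : n2sq (A.mulVec z) ≤ 2 * n2sq z := by
    have := (hA z hz).2
    nlinarith [n2sq_nonneg z]
  calc n2 (A.mulVec z) ≤ Real.sqrt (2 * n2sq z) := Real.sqrt_le_sqrt h1
    _ = Real.sqrt 2 * n2 z := Real.sqrt_mul (by norm_num) _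

/-- Comparison of sums: a sum over a smaller set of smaller values is bounded by
the sum over a bigger set of bigger values. -/
lemma sum_le_sum_dominate {ι : Type*} (A B : Finset ι) (f : ι → ℝ) (hf : ∀ i, 0 ≤ f i)
    (hcard : A.card ≤ B.card) (hdom : ∀ a ∈ A, ∀ b ∈ B, f a ≤ f b) :
    ∑ i ∈ A, f i ≤ ∑ i ∈ B, f i := by
  rcases A.eq_empty_or_nonempty with rfl | hA
  · exact Finset.sum_nonneg fun i _ => hf i
  have hB : 0 < B.card := lt_of_lt_of_le (Finset.card_pos.2 hA) hcard
  have hBpos : (0 : ℝ) < B.card := by exact_mod_cast hB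
  have h1 : (B.card : ℝ) * ∑ i ∈ A, f i ≤ (B.card : ℝ) * ∑ i ∈ B, f i := by
    calc (B.card : ℝ) * ∑ i ∈ A, f i = ∑ a ∈ A, ∑ _b ∈ B, f a := by
          rw [Finset.mul_sum]
          exact Finset.sum_congr rfl fun a _ => by rw [Finset.sum_const, nsmul_eq_mul]
      _ ≤ ∑ a ∈ A, ∑ b ∈ B, f b :=
          Finset.sum_le_sum fun a ha => Finset.sum_le_sum fun b hb => hdom a ha b hb
      _ = (A.card : ℝ) * ∑ b ∈ B, f b := by rw [Finset.sum_const, nsmul_eq_mul]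
      _ ≤ (B.card : ℝ) * ∑ b ∈ B, f b := by
          have : (0:ℝ) ≤ ∑ b ∈ B, f b := Finset.sum_nonneg fun b _ => hf b
          have : (A.card : ℝ) ≤ B.card := by exact_mod_cast hcard
          nlinarith [Finset.sum_nonneg (fun b (_ : b ∈ B) => hf b)]
  exact le_of_mul_le_mul_left h1 hBpos

/-- Existence of a "top `n`" subset of `F` for the values `‖x ·‖`. -/
lemma exists_top_subset {N : ℕ} (x : Fin N → ℂ) (n : ℕ) (F : Finset (Fin N)) :
    ∃ T, T ⊆ F ∧ T.card = min n F.card ∧ ∀ i ∈ T, ∀ j ∈ F \ T, ‖x j‖ ≤ ‖x i‖ := by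
  induction n generalizing F with
  | zero => exact ⟨∅, by simp⟩
  | succ n IH =>
    rcases F.eq_empty_or_nonempty with rfl | hne
    · exact ⟨∅, by simp⟩
    · obtain ⟨i0, hi0F, hmax⟩ := F.exists_max_image (fun i => ‖x i‖) hne
      obtain ⟨T', hT'sub, hT'card, hT'top⟩ := IH (F.erase i0)
      have hi0T' : i0 ∉ T' := fun h => (Finset.notMem_erase i0 F) (hT'sub h)
      refine ⟨insert i0 T', ?_, ?_, ?_⟩
      · intro a ha
        rcases Finset.mem_insert.1 ha with rfl | h
        · exact hi0F
        · exact Finset.mem_of_mem_erase (hT'sub h)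
      · rw [Finset.card_insert_of_notMem hi0T', hT'card, Finset.card_erase_of_mem hi0F]
        have : 1 ≤ F.card := Finset.card_pos.2 hne
        omega
      · intro i hi j hj
        have hjF : j ∈ F := (Finset.mem_sdiff.1 hj).1
        have hjT : j ∉ insert i0 T' := (Finset.mem_sdiff.1 hj).2
        rcases Finset.mem_insert.1 hi with rfl | hiT'
        · exact hmax j hjF
        · refine hT'top i hiT' j (Finset.mem_sdiff.2 ⟨Finset.mem_erase.2 ⟨?_, hjF⟩, ?_⟩)
          · intro h; exact hjT (h ▸ Finset.mem_insert_self i0 T')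
          · intro h; exact hjT (Finset.mem_insert_of_mem h)

end Aux

section Levels

variable {N r : ℕ} {M : ℕ → ℕ}

lemma M_le_M (hM : LevelsOK N r M) : ∀ {a b : ℕ}, a ≤ b → b ≤ r → M a ≤ M b := by
  intro a b hab hbr
  induction b with
  | zero => rw [Nat.le_zero.1 hab]
  | succ b IH =>
    rcases Nat.eq_or_lt_of_le hab with rfl | hlt
    · exact le_rfl
    · have h1 : M a ≤ M b := IH (by omega) (by omega)
      have h2 : M b < M (b + 1) := hM.2.2 b (by omega)
      omega

lemma exists_level (hM : LevelsOK N r M) (hr : 0 < r) (i : Fin N) :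
    ∃ k < r, i ∈ level N M k := by
  have hwit : (i : ℕ) < M (r - 1 + 1) := by
    rw [Nat.sub_add_cancel hr, hM.2.1]; exact i.2
  have hex : ∃ k, (i : ℕ) < M (k + 1) := ⟨r - 1, hwit⟩
  set k := Nat.find hex with hk
  have hk1 : (i : ℕ) < M (k + 1) := Nat.find_spec hex
  have hkr : k ≤ r - 1 := Nat.find_min' hex hwit
  have hMk : M k ≤ (i : ℕ) := by
    rcases Nat.eq_zero_or_pos k with h0 | hpos
    · rw [h0, hM.1]; exact Nat.zero_le _
    · have h := Nat.find_min hex (show k - 1 < k by omega)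
      rw [Nat.sub_add_cancel hpos] at h
      omega
  exact ⟨k, by omega, by simp [level, hMk, hk1]⟩

lemma level_disjoint (hM : LevelsOK N r M) {k k' : ℕ} (hk : k < r) (hk' : k' < r)
    (hne : k ≠ k') : Disjoint (level N M k) (level N M k') := by
  have aux : ∀ {a b : ℕ}, a < b → b < r →
      Disjoint (level N M a) (level N M b) := by
    intro a b hab hbr
    rw [Finset.disjoint_left]
    intro i hia hib
    simp only [level, Finset.mem_filter] at hia hib
    have : M (a + 1) ≤ M b := M_le_M hM (by omega) (by omega)
    omega
  rcases Nat.lt_or_ge k k' with h | h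
  · exact aux h hk'
  · exact (aux (by omega) hk).symm

lemma univ_eq_biUnion_level (hM : LevelsOK N r M) (hr : 0 < r) :
    (Finset.univ : Finset (Fin N)) = (Finset.range r).biUnion (level N M) := by
  ext i
  simp only [Finset.mem_biUnion, Finset.mem_range, Finset.mem_univ, true_iff]
  exact exists_level hM hr i

lemma sum_levels (hM : LevelsOK N r M) (hr : 0 < r) (f : Fin N → ℝ) :
    ∑ i, f i = ∑ k ∈ Finset.range r, ∑ i ∈ level N M k, f i := by
  rw [univ_eq_biUnion_level hM hr]
  exact Finset.sum_biUnion fun k hk k' hk' hne =>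
    level_disjoint hM (Finset.mem_range.1 hk) (Finset.mem_range.1 hk') hne

lemma sum_inter_levels (hM : LevelsOK N r M) (hr : 0 < r) (S : Finset (Fin N))
    (f : Fin N → ℝ) :
    ∑ i ∈ S, f i = ∑ k ∈ Finset.range r, ∑ i ∈ S ∩ level N M k, f i := by
  have hS : S = (Finset.range r).biUnion (fun k => S ∩ level N M k) := by
    ext i
    simp only [Finset.mem_biUnion, Finset.mem_range, Finset.mem_inter]
    constructor
    · intro hi
      obtain ⟨k, hk, hik⟩ := exists_level hM hr i
      exact ⟨k, hk, hi, hik⟩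
    · rintro ⟨k, _, hi, _⟩; exact hi
  conv_lhs => rw [hS]
  have hdisj : Set.PairwiseDisjoint (↑(Finset.range r) : Set ℕ)
      (fun k => S ∩ level N M k) := by
    intro k hk k' hk' hne
    rw [Finset.mem_coe] at hk hk'
    rw [Function.onFun, Finset.disjoint_left]
    intro a ha ha'
    exact Finset.disjoint_left.1
      (level_disjoint hM (Finset.mem_range.1 hk) (Finset.mem_range.1 hk') hne)
      (Finset.mem_inter.1 ha).2 (Finset.mem_inter.1 ha').2
  exact Finset.sum_biUnion hdisj

lemma proj_compl_eq_sum (hM : LevelsOK N r M) (hr : 0 < r) (Ξ : Finset (Fin N))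
    (x : Fin N → ℂ) :
    proj (Finset.univ \ Ξ) x = ∑ k ∈ Finset.range r, proj (level N M k \ Ξ) x := by
  funext i
  rw [Finset.sum_apply]
  obtain ⟨k0, hk0, hik0⟩ := exists_level hM hr i
  by_cases hiΞ : i ∈ Ξ
  · simp [proj, Finset.mem_sdiff, hiΞ]
  · have hz : ∀ k ∈ Finset.range r, k ≠ k0 → proj (level N M k \ Ξ) x i = 0 := by
      intro k hk hne
      simp only [proj]
      rw [if_neg]
      intro hmem
      have hik : i ∈ level N M k := (Finset.mem_sdiff.1 hmem).1
      exact (Finset.disjoint_left.1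
        (level_disjoint hM (Finset.mem_range.1 hk) hk0 hne)) hik hik0
    rw [Finset.sum_eq_single_of_mem k0 (Finset.mem_range.2 hk0) hz]
    simp [proj, Finset.mem_sdiff, hiΞ, hik0]

end Levels

section Main

variable {N r : ℕ} {M s : ℕ → ℕ}

lemma sparse_zero : Sparse r M s (0 : Fin N → ℂ) := by
  intro k hk
  have h : supp (0 : Fin N → ℂ) = ∅ := by simp [supp]
  simp [h]

lemma supp_proj_subset (c : Finset (Fin N)) (x : Fin N → ℂ) : supp (proj c x) ⊆ c := by
  intro i hi
  simp only [supp, Finset.mem_filter] at hi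
  by_contra hc
  exact hi.2 (by simp [proj, hc])

lemma sparse_proj (c : Finset (Fin N)) (x : Fin N → ℂ)
    (h : ∀ k < r, (c ∩ level N M k).card ≤ s k) : Sparse r M s (proj c x) := by
  intro k hk
  exact le_trans (Finset.card_le_card
    (Finset.inter_subset_inter (supp_proj_subset c x) (subset_refl _))) (h k hk)

/-- Existence of a per-level top-`s` set `T` inside a given top-`2s` set `Ξ`. -/
lemma exists_T (hM : LevelsOK N r M) (x : Fin N → ℂ) (Ξ : Finset (Fin N))
    (hΞcard : ∀ k < r, (Ξ ∩ level N M k).card = min (2 * s k) (level N M k).card)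
    (hΞtop : ∀ k < r, ∀ i ∈ Ξ ∩ level N M k, ∀ j ∈ level N M k \ Ξ, ‖x j‖ ≤ ‖x i‖) :
    ∃ T : Finset (Fin N), T ⊆ Ξ ∧
      (∀ k < r, T ∩ level N M k ⊆ Ξ ∩ level N M k) ∧
      (∀ k < r, (T ∩ level N M k).card = min (s k) (level N M k).card) ∧
      (∀ k < r, ∀ i ∈ T ∩ level N M k, ∀ j ∈ level N M k \ T, ‖x j‖ ≤ ‖x i‖) := by
  classical
  choose Tk hTk1 hTk2 hTk3 using fun k => exists_top_subset x (s k) (Ξ ∩ level N M k)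
  refine ⟨(Finset.range r).biUnion Tk, ?_, ?_, ?_, ?_⟩
  case _ =>
    intro i hi
    obtain ⟨k, _, hik⟩ := Finset.mem_biUnion.1 hi
    exact (Finset.mem_inter.1 ((hTk1 k) hik)).1
  all_goals
    have hTlev : ∀ k < r, ((Finset.range r).biUnion Tk) ∩ level N M k = Tk k := by
      intro k hk
      apply Finset.Subset.antisymm
      · intro i hi
        obtain ⟨hiT, hiL⟩ := Finset.mem_inter.1 hi
        obtain ⟨k', hk', hik'⟩ := Finset.mem_biUnion.1 hiT
        have hiL' : i ∈ level N M k' := (Finset.mem_inter.1 ((hTk1 k') hik')).2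
        have hkk : k' = k := by
          by_contra hne
          exact (Finset.disjoint_left.1
            (level_disjoint hM (Finset.mem_range.1 hk') hk hne)) hiL' hiL
        rwa [hkk] at hik'
      · intro i hi
        exact Finset.mem_inter.2 ⟨Finset.mem_biUnion.2 ⟨k, Finset.mem_range.2 hk, hi⟩,
          (Finset.mem_inter.1 ((hTk1 k) hi)).2⟩
  case _ =>
    intro k hk
    rw [hTlev k hk]
    exact (hTk1 k).trans (subset_refl _)
  case _ =>
    intro k hk
    rw [hTlev k hk, hTk2 k, hΞcard k hk]
    omega
  case _ =>
    intro k hk i hi j hj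
    rw [hTlev k hk] at hi
    obtain ⟨hjL, hjT⟩ := Finset.mem_sdiff.1 hj
    by_cases hjΞ : j ∈ Ξ
    · refine hTk3 k i hi j (Finset.mem_sdiff.2 ⟨Finset.mem_inter.2 ⟨hjΞ, hjL⟩, ?_⟩)
      intro hjTk
      exact hjT (Finset.mem_biUnion.2 ⟨k, Finset.mem_range.2 hk, hjTk⟩)
    · exact hΞtop k hk i ((hTk1 k) hi) j (Finset.mem_sdiff.2 ⟨hjL, hjΞ⟩)

/-- Per-level comparison: removing a top-`s` set beats removing any `s`-sparse set. -/
lemma topset_level_le (x : Fin N → ℂ) (L T S : Finset (Fin N)) (sk : ℕ)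
    (hTcard : (T ∩ L).card = min sk L.card)
    (htop : ∀ i ∈ T ∩ L, ∀ j ∈ L \ T, ‖x j‖ ≤ ‖x i‖)
    (hS : (S ∩ L).card ≤ sk) :
    ∑ i ∈ L \ T, ‖x i‖ ≤ ∑ i ∈ L \ S, ‖x i‖ := by
  classical
  have hsplit1 : L \ T = (L \ (T ∪ S)) ∪ ((S ∩ L) \ T) := by
    ext i
    simp only [Finset.mem_sdiff, Finset.mem_union, Finset.mem_inter]
    tauto
  have hsplit2 : L \ S = (L \ (T ∪ S)) ∪ ((T ∩ L) \ S) := by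
    ext i
    simp only [Finset.mem_sdiff, Finset.mem_union, Finset.mem_inter]
    tauto
  have hd1 : Disjoint (L \ (T ∪ S)) ((S ∩ L) \ T) := by
    rw [Finset.disjoint_left]
    intro a ha hb
    simp only [Finset.mem_sdiff, Finset.mem_union, Finset.mem_inter] at ha hb
    tauto
  have hd2 : Disjoint (L \ (T ∪ S)) ((T ∩ L) \ S) := by
    rw [Finset.disjoint_left]
    intro a ha hb
    simp only [Finset.mem_sdiff, Finset.mem_union, Finset.mem_inter] at ha hb
    tauto
  rw [hsplit1, hsplit2, Finset.sum_union hd1, Finset.sum_union hd2]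
  refine add_le_add (le_refl _) ?_
  refine sum_le_sum_dominate _ _ _ (fun i => norm_nonneg _) ?_ ?_
  · rcases le_total sk L.card with hc | hc
    · have hT : (T ∩ L).card = sk := by omega
      have e1 := Finset.card_sdiff_add_card_inter (S ∩ L) T
      have e2 := Finset.card_sdiff_add_card_inter (T ∩ L) S
      have e3 : (S ∩ L ∩ T).card = (T ∩ L ∩ S).card := by
        congr 1
        ext i
        simp only [Finset.mem_inter]
        tauto
      omega
    · have hT : (T ∩ L).card = L.card := by omega
      have hTL : T ∩ L = L :=
        Finset.eq_of_subset_of_card_le Finset.inter_subset_right (le_of_eq hT.symm)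
      have hempty : (S ∩ L) \ T = ∅ := by
        rw [Finset.eq_empty_iff_forall_notMem]
        intro a ha
        simp only [Finset.mem_sdiff, Finset.mem_inter] at ha
        have : a ∈ T ∩ L := hTL.symm ▸ ha.1.2
        exact ha.2 (Finset.mem_inter.1 this).1
      simp [hempty]
  · intro a ha b hb
    have haL : a ∈ L \ T := by
      simp only [Finset.mem_sdiff, Finset.mem_inter] at ha ⊢
      tauto
    have hbT : b ∈ T ∩ L := (Finset.mem_sdiff.1 hb).1
    exact htop b hbT a haL

/-- Within weights constant on levels, removing a per-level top-`s` set is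
`ℓ¹_w`-optimal among `(s,M)`-sparse approximations. -/
lemma topset_optimal (hM : LevelsOK N r M) (hr : 0 < r) (w : Fin N → ℝ) (wl : ℕ → ℝ)
    (hwl : ∀ k < r, 0 ≤ wl k)
    (hwlevel : ∀ k < r, ∀ i ∈ level N M k, w i = wl k)
    (x z : Fin N → ℂ) (T : Finset (Fin N)) (hz : Sparse r M s z)
    (hTcard : ∀ k < r, (T ∩ level N M k).card = min (s k) (level N M k).card)
    (htop : ∀ k < r, ∀ i ∈ T ∩ level N M k, ∀ j ∈ level N M k \ T, ‖x j‖ ≤ ‖x i‖) :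
    wn1 w (x - proj T x) ≤ wn1 w (x - z) := by
  classical
  rw [wn1, wn1, sum_levels hM hr, sum_levels hM hr]
  refine Finset.sum_le_sum ?_
  intro k hk'
  have hk : k < r := Finset.mem_range.1 hk'
  set L := level N M k with hL
  have hLHS : ∑ i ∈ L, w i * ‖(x - proj T x) i‖ = wl k * ∑ i ∈ L \ T, ‖x i‖ := by
    rw [← Finset.sum_inter_add_sum_sdiff L T (fun i => w i * ‖(x - proj T x) i‖)]
    have h0 : ∑ i ∈ L ∩ T, w i * ‖(x - proj T x) i‖ = 0 := by
      refine Finset.sum_eq_zero ?_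
      intro i hi
      have hiT : i ∈ T := (Finset.mem_inter.1 hi).2
      simp [proj, hiT]
    rw [h0, zero_add, Finset.mul_sum]
    refine Finset.sum_congr rfl ?_
    intro i hi
    obtain ⟨hiL, hiT⟩ := Finset.mem_sdiff.1 hi
    rw [hwlevel k hk i hiL]
    simp [proj, hiT]
  have hRHS : wl k * ∑ i ∈ L \ supp z, ‖x i‖ ≤ ∑ i ∈ L, w i * ‖(x - z) i‖ := by
    have h1 : ∑ i ∈ L \ supp z, w i * ‖(x - z) i‖ ≤ ∑ i ∈ L, w i * ‖(x - z) i‖ := by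
      refine Finset.sum_le_sum_of_subset_of_nonneg (Finset.sdiff_subset) ?_
      intro i hi _
      have : w i = wl k := hwlevel k hk i hi
      rw [this]
      exact mul_nonneg (hwl k hk) (norm_nonneg _)
    refine le_trans (le_of_eq ?_) h1
    rw [Finset.mul_sum]
    refine Finset.sum_congr rfl ?_
    intro i hi
    obtain ⟨hiL, hiS⟩ := Finset.mem_sdiff.1 hi
    have hz0 : z i = 0 := by
      by_contra h
      exact hiS (Finset.mem_filter.2 ⟨Finset.mem_univ i, h⟩)
    rw [hwlevel k hk i hiL]
    simp [hz0]
  rw [hLHS]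
  refine le_trans ?_ hRHS
  exact mul_le_mul_of_nonneg_left
    (topset_level_le x L T (supp z) (s k) (hTcard k hk) (htop k hk) (hz k hk))
    (hwl k hk)

/-- Stechkin-type chunking bound: the image under `A` of a uniformly small vector on `F`
is controlled by `√s·t + ‖x|F‖₁/√s`, provided `A` is `√2`-bounded on `s`-small subsets. -/
lemma chunk_bound {m : ℕ} (A : Matrix (Fin m) (Fin N) ℂ) (x : Fin N → ℂ) (sk : ℕ)
    (hsk : 1 ≤ sk) :
    ∀ F : Finset (Fin N), ∀ t : ℝ, 0 ≤ t → (∀ j ∈ F, ‖x j‖ ≤ t) →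
      (∀ c ⊆ F, c.card ≤ sk → n2 (A.mulVec (proj c x)) ≤ Real.sqrt 2 * n2 (proj c x)) →
      n2 (A.mulVec (proj F x)) ≤
        Real.sqrt 2 * (Real.sqrt sk * t + (∑ i ∈ F, ‖x i‖) / Real.sqrt sk) := by
  classical
  intro F
  induction F using Finset.strongInduction with
  | _ F IH =>
    intro t ht0 ht HA
    have hskR : (0:ℝ) < (sk : ℝ) := by exact_mod_cast hsk
    have hsq : (0:ℝ) < Real.sqrt sk := Real.sqrt_pos.2 hskR
    have h2 : (0:ℝ) ≤ Real.sqrt 2 := Real.sqrt_nonneg 2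
    by_cases hFs : F.card ≤ sk
    · have h1 := HA F (subset_refl F) hFs
      have hle : n2 (proj F x) ≤ Real.sqrt sk * t := by
        refine le_trans (n2_proj_le F x t ht0 ht) ?_
        exact mul_le_mul_of_nonneg_right
          (Real.sqrt_le_sqrt (by exact_mod_cast hFs)) ht0
      have h3 : 0 ≤ (∑ i ∈ F, ‖x i‖) / Real.sqrt sk := by
        have : (0:ℝ) ≤ ∑ i ∈ F, ‖x i‖ := Finset.sum_nonneg fun i _ => norm_nonneg _
        positivity
      calc n2 (A.mulVec (proj F x)) ≤ Real.sqrt 2 * n2 (proj F x) := h1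
        _ ≤ Real.sqrt 2 * (Real.sqrt sk * t) := mul_le_mul_of_nonneg_left hle h2
        _ ≤ Real.sqrt 2 * (Real.sqrt sk * t + (∑ i ∈ F, ‖x i‖) / Real.sqrt sk) := by
            nlinarith
    · push_neg at hFs
      obtain ⟨T, hTsub, hTcard, hTtop⟩ := exists_top_subset x sk F
      have hTcard' : T.card = sk := by rw [hTcard]; omega
      have hTne : T.Nonempty := Finset.card_pos.1 (by omega)
      set F' := F \ T with hF'
      have hssub : F' ⊂ F := Finset.sdiff_ssubset hTsub hTne
      have hproj : proj F x = proj T x + proj F' x := by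
        funext i
        simp only [proj, Pi.add_apply, hF', Finset.mem_sdiff]
        by_cases hiT : i ∈ T
        · have hiF : i ∈ F := hTsub hiT
          simp [hiT, hiF]
        · by_cases hiF : i ∈ F <;> simp [hiT, hiF]
      set t' := (∑ i ∈ T, ‖x i‖) / (sk : ℝ) with ht'def
      have hTsum0 : (0:ℝ) ≤ ∑ i ∈ T, ‖x i‖ := Finset.sum_nonneg fun i _ => norm_nonneg _
      have ht'0 : 0 ≤ t' := by positivity
      have ht'F : ∀ j ∈ F', ‖x j‖ ≤ t' := by
        intro j hj
        have hconst : (sk:ℝ) * ‖x j‖ = ∑ _i ∈ T, ‖x j‖ := by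
          rw [Finset.sum_const, hTcard', nsmul_eq_mul]
        have hle : (sk:ℝ) * ‖x j‖ ≤ ∑ i ∈ T, ‖x i‖ := by
          rw [hconst]
          exact Finset.sum_le_sum fun i hi => hTtop i hi j hj
        rw [ht'def, le_div_iff₀ hskR]
        linarith
      have hHA' : ∀ c ⊆ F', c.card ≤ sk →
          n2 (A.mulVec (proj c x)) ≤ Real.sqrt 2 * n2 (proj c x) :=
        fun c hc h => HA c (hc.trans Finset.sdiff_subset) h
      have hrec := IH F' hssub t' ht'0 ht'F hHA'
      have hT2 : n2 (A.mulVec (proj T x)) ≤ Real.sqrt 2 * (Real.sqrt sk * t) := by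
        have hb : n2 (proj T x) ≤ Real.sqrt sk * t := by
          have := n2_proj_le T x t ht0 (fun i hi => ht i (hTsub hi))
          rwa [hTcard'] at this
        exact le_trans (HA T hTsub (le_of_eq hTcard')) (mul_le_mul_of_nonneg_left hb h2)
      have hsum : n2 (A.mulVec (proj F x)) ≤
          n2 (A.mulVec (proj T x)) + n2 (A.mulVec (proj F' x)) := by
        rw [hproj, Matrix.mulVec_add]
        exact n2_add_le _ _
      have hsplit : ∑ i ∈ F, ‖x i‖ = ∑ i ∈ F', ‖x i‖ + ∑ i ∈ T, ‖x i‖ :=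
        (Finset.sum_sdiff hTsub).symm
      have hkey : Real.sqrt sk * t' = (∑ i ∈ T, ‖x i‖) / Real.sqrt sk := by
        have hss : Real.sqrt sk * Real.sqrt sk = (sk : ℝ) :=
          Real.mul_self_sqrt (le_of_lt hskR)
        rw [ht'def]
        field_simp
        linear_combination (∑ i ∈ T, ‖x i‖) * hss
      calc n2 (A.mulVec (proj F x))
          ≤ Real.sqrt 2 * (Real.sqrt sk * t) +
            Real.sqrt 2 * (Real.sqrt sk * t' + (∑ i ∈ F', ‖x i‖) / Real.sqrt sk) := by
            linarith
        _ = Real.sqrt 2 * (Real.sqrt sk * t + (∑ i ∈ F, ‖x i‖) / Real.sqrt sk) := by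
            rw [hkey, hsplit]
            rw [add_div]
            ring

/-- Weighted ℓ¹ norm of the residual after removing a set `T`, level by level. -/
lemma wn1_sub_proj (hM : LevelsOK N r M) (hr : 0 < r) (w : Fin N → ℝ) (wl : ℕ → ℝ)
    (hwlevel : ∀ k < r, ∀ i ∈ level N M k, w i = wl k) (x : Fin N → ℂ)
    (T : Finset (Fin N)) :
    wn1 w (x - proj T x) =
      ∑ k ∈ Finset.range r, wl k * ∑ i ∈ level N M k \ T, ‖x i‖ := by
  classical
  rw [wn1, sum_levels hM hr]
  refine Finset.sum_congr rfl ?_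
  intro k hk'
  have hk : k < r := Finset.mem_range.1 hk'
  set L := level N M k with hL
  rw [← Finset.sum_inter_add_sum_sdiff L T (fun i => w i * ‖(x - proj T x) i‖)]
  have h0 : ∑ i ∈ L ∩ T, w i * ‖(x - proj T x) i‖ = 0 := by
    refine Finset.sum_eq_zero ?_
    intro i hi
    have hiT : i ∈ T := (Finset.mem_inter.1 hi).2
    simp [proj, hiT]
  rw [h0, zero_add, Finset.mul_sum]
  refine Finset.sum_congr rfl ?_
  intro i hi
  obtain ⟨hiL, hiT⟩ := Finset.mem_sdiff.1 hi
  rw [hwlevel k hk i hiL]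
  simp [proj, hiT]

/-- The key estimate: `‖A x|_{Ξᶜ}‖₂` is bounded via per-level chunking. -/
lemma Abound (hM : LevelsOK N r M) (hr : 0 < r) {m : ℕ} {A : Matrix (Fin m) (Fin N) ℂ}
    {δ : ℝ} (hδ : δ < 1) (hA : RIPBound A r M s δ) (hs : ∀ k < r, 1 ≤ s k)
    (x : Fin N → ℂ) (Ξ T : Finset (Fin N))
    (hΞcard : ∀ k < r, (Ξ ∩ level N M k).card = min (2 * s k) (level N M k).card)
    (hΞtop : ∀ k < r, ∀ i ∈ Ξ ∩ level N M k, ∀ j ∈ level N M k \ Ξ, ‖x j‖ ≤ ‖x i‖)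
    (hTsub : T ⊆ Ξ)
    (hTcard : ∀ k < r, (T ∩ level N M k).card = min (s k) (level N M k).card) :
    n2 (A.mulVec (proj (Finset.univ \ Ξ) x)) ≤
      Real.sqrt 2 * ∑ k ∈ Finset.range r,
        (∑ i ∈ level N M k \ T, ‖x i‖) / Real.sqrt (s k) := by
  classical
  rw [proj_compl_eq_sum hM hr, mulVec_sum]
  refine le_trans (n2_sum_le _ _) ?_
  rw [Finset.mul_sum]
  refine Finset.sum_le_sum ?_
  intro k hk'
  have hk : k < r := Finset.mem_range.1 hk'
  set L := level N M k with hLdef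
  have hskR : (0:ℝ) < (s k : ℝ) := by exact_mod_cast hs k hk
  have hsq : (0:ℝ) < Real.sqrt (s k) := Real.sqrt_pos.2 hskR
  have hLT0 : (0:ℝ) ≤ ∑ i ∈ L \ T, ‖x i‖ := Finset.sum_nonneg fun i _ => norm_nonneg _
  have hRHS0 : (0:ℝ) ≤ Real.sqrt 2 * ((∑ i ∈ L \ T, ‖x i‖) / Real.sqrt (s k)) := by
    have h2 : (0:ℝ) ≤ Real.sqrt 2 := Real.sqrt_nonneg 2
    positivity
  rcases le_or_gt L.card (2 * s k) with hcase | hcase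
  · -- the whole level is inside Ξ; nothing to bound
    have hcard : (Ξ ∩ L).card = L.card := by
      have hx := hΞcard k hk; rw [← hLdef] at hx; omega
    have hΞL : Ξ ∩ L = L :=
      Finset.eq_of_subset_of_card_le Finset.inter_subset_right (le_of_eq hcard.symm)
    have hF : L \ Ξ = ∅ := by
      rw [Finset.eq_empty_iff_forall_notMem]
      intro a ha
      obtain ⟨haL, haΞ⟩ := Finset.mem_sdiff.1 ha
      exact haΞ (Finset.mem_inter.1 (hΞL.symm ▸ haL : a ∈ Ξ ∩ L)).1
    rw [hF, proj_empty, Matrix.mulVec_zero, n2_zero]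
    exact hRHS0
  · -- the generic case
    have hcardΞ : (Ξ ∩ L).card = 2 * s k := by
      have hx := hΞcard k hk; rw [← hLdef] at hx; omega
    have hcardT : (T ∩ L).card = s k := by
      have hx := hTcard k hk; rw [← hLdef] at hx; omega
    set S' := (Ξ ∩ L) \ T with hS'
    have hTsubΞL : T ∩ L ⊆ Ξ ∩ L := fun i hi =>
      Finset.mem_inter.2 ⟨hTsub (Finset.mem_inter.1 hi).1, (Finset.mem_inter.1 hi).2⟩
    have hS'card : S'.card = s k := by
      have h1 : (Ξ ∩ L) ∩ T = T ∩ L := by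
        ext i
        simp only [Finset.mem_inter]
        constructor
        · rintro ⟨⟨_, hiL⟩, hiT⟩; exact ⟨hiT, hiL⟩
        · rintro ⟨hiT, hiL⟩; exact ⟨⟨hTsub hiT, hiL⟩, hiT⟩
      have h2 := Finset.card_sdiff_add_card_inter (Ξ ∩ L) T
      rw [h1, hcardT, ← hS'] at h2
      omega
    set t := (∑ i ∈ S', ‖x i‖) / (s k : ℝ) with htdef
    have hsum0 : (0:ℝ) ≤ ∑ i ∈ S', ‖x i‖ := Finset.sum_nonneg fun i _ => norm_nonneg _
    have ht0 : 0 ≤ t := by positivity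
    have htF : ∀ j ∈ L \ Ξ, ‖x j‖ ≤ t := by
      intro j hj
      have hconst : ((s k):ℝ) * ‖x j‖ = ∑ _i ∈ S', ‖x j‖ := by
        rw [Finset.sum_const, hS'card, nsmul_eq_mul]
      have hle : ((s k):ℝ) * ‖x j‖ ≤ ∑ i ∈ S', ‖x i‖ := by
        rw [hconst]
        refine Finset.sum_le_sum ?_
        intro i hi
        exact hΞtop k hk i (Finset.mem_sdiff.1 hi).1 j hj
      rw [htdef, le_div_iff₀ hskR]
      linarith
    have hHA : ∀ c ⊆ L \ Ξ, c.card ≤ s k →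
        n2 (A.mulVec (proj c x)) ≤ Real.sqrt 2 * n2 (proj c x) := by
      intro c hc hcard
      refine rip_sqrt_two hδ hA (sparse_proj c x ?_)
      intro k' hk'
      by_cases hkk : k' = k
      · subst hkk
        refine le_trans (Finset.card_le_card Finset.inter_subset_left) hcard
      · have hdisj := level_disjoint hM hk hk' (fun h => hkk h.symm)
        have : c ∩ level N M k' = ∅ := by
          rw [Finset.eq_empty_iff_forall_notMem]
          intro a ha
          obtain ⟨hac, hak'⟩ := Finset.mem_inter.1 ha
          have haL : a ∈ L := (Finset.mem_sdiff.1 (hc hac)).1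
          exact (Finset.disjoint_left.1 hdisj) haL hak'
        simp [this]
    have hchunk := chunk_bound A x (s k) (hs k hk) (L \ Ξ) t ht0 htF hHA
    have hkey : Real.sqrt (s k) * t = (∑ i ∈ S', ‖x i‖) / Real.sqrt (s k) := by
      have hss : Real.sqrt (s k) * Real.sqrt (s k) = ((s k) : ℝ) :=
        Real.mul_self_sqrt (le_of_lt hskR)
      rw [htdef]
      field_simp
      linear_combination (∑ i ∈ S', ‖x i‖) * hss
    have hunion : ∑ i ∈ S', ‖x i‖ + ∑ i ∈ L \ Ξ, ‖x i‖ ≤ ∑ i ∈ L \ T, ‖x i‖ := by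
      have hdisj : Disjoint S' (L \ Ξ) := by
        rw [Finset.disjoint_left]
        intro a ha ha'
        exact (Finset.mem_sdiff.1 ha').2 (Finset.mem_inter.1 (Finset.mem_sdiff.1 ha).1).1
      rw [← Finset.sum_union hdisj]
      refine Finset.sum_le_sum_of_subset_of_nonneg ?_ (fun i _ _ => norm_nonneg _)
      intro a ha
      rcases Finset.mem_union.1 ha with h | h
      · obtain ⟨haΞL, haT⟩ := Finset.mem_sdiff.1 h
        exact Finset.mem_sdiff.2 ⟨(Finset.mem_inter.1 haΞL).2, haT⟩
      · obtain ⟨haL, haΞ⟩ := Finset.mem_sdiff.1 h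
        exact Finset.mem_sdiff.2 ⟨haL, fun hT => haΞ (hTsub hT)⟩
    refine le_trans hchunk ?_
    rw [hkey]
    have h2 : (0:ℝ) ≤ Real.sqrt 2 := Real.sqrt_nonneg 2
    have : (∑ i ∈ S', ‖x i‖) / Real.sqrt (s k) + (∑ i ∈ L \ Ξ, ‖x i‖) / Real.sqrt (s k) ≤
        (∑ i ∈ L \ T, ‖x i‖) / Real.sqrt (s k) := by
      rw [← add_div]
      exact div_le_div_of_nonneg_right hunion hsq.le
    nlinarith

end Main

/-- weighted approximation theorem, weighted ℓ¹ bound: there exist constants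
`C, D > 0` depending only on `κ` and `τ` (and `E_κ = √(2+κ)`) such that under the same
hypotheses as Statement 7,
`‖x − x'‖_{ℓ¹_w} ≤ C (√ζ/√ξ) σ_{s,M}(x)_{ℓ¹_w} + D √ζ ‖e‖₂ + √(2+κ) √ζ λ`. -/
theorem stmt8 (κ : ℕ) (τ : ℝ) (hκ : 0 < κ) (hτ : 0 < τ) :
    ∃ C D : ℝ, 0 < C ∧ 0 < D ∧
      ∀ (m N r : ℕ) (M s : ℕ → ℕ), LevelsOK N r M → 0 < r → (∀ k < r, 1 ≤ s k) →
      ∀ (w : Fin N → ℝ) (wl : ℕ → ℝ), (∀ k < r, 0 < wl k) →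
        (∀ k < r, ∀ i ∈ level N M k, w i = wl k) →
      ∀ (A : Matrix (Fin m) (Fin N) ℂ), ricl A r M s < 1 →
      ∀ lam : ℝ, 0 ≤ lam →
      ∀ (x x' : Fin N → ℂ) (e : Fin m → ℂ),
        Sparse r M (fun k => κ * s k) x' →
        ∀ Ξ : Finset (Fin N), IsTopSet r M (fun k => 2 * s k) x Ξ →
        n2 (proj Ξ x - x') ≤ τ * n2 (A.mulVec (proj (Finset.univ \ Ξ) x) + e) + lam →
        wn1 w (x - x') ≤
          C * (Real.sqrt (zeta r s wl) / Real.sqrt (xiMin r s wl)) *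
              bestApprox r M s w x +
            D * Real.sqrt (zeta r s wl) * n2 e +
            Real.sqrt (2 + κ) * Real.sqrt (zeta r s wl) * lam := by
  classical
  have hEpos : 0 < Real.sqrt (2 + (κ:ℝ)) := Real.sqrt_pos.2 (by positivity)
  have h2pos : 0 < Real.sqrt 2 := Real.sqrt_pos.2 (by norm_num)
  have hCaux : 0 ≤ Real.sqrt 2 * τ * Real.sqrt (2 + (κ:ℝ)) :=
    mul_nonneg (mul_nonneg h2pos.le hτ.le) hEpos.le
  refine ⟨1 + Real.sqrt 2 * τ * Real.sqrt (2 + (κ:ℝ)), τ * Real.sqrt (2 + (κ:ℝ)),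
    by linarith, mul_pos hτ hEpos, ?_⟩
  intro m N r M s hM hr hs w wl hwl hwlevel A hricl lam hlam x x' e hx' Ξ hΞ hest
  obtain ⟨δ, hδ0, hδ1, hA⟩ := exists_rip A hricl
  obtain ⟨T, hTsub, hTlevsub, hTcard, hTtop⟩ := exists_T hM x Ξ hΞ.1 hΞ.2
  have hw0 : ∀ i, 0 ≤ w i := by
    intro i
    obtain ⟨k, hk, hik⟩ := exists_level hM hr i
    rw [hwlevel k hk i hik]; exact (hwl k hk).le
  set E := Real.sqrt (2 + (κ:ℝ)) with hEdef
  -- ξ and ζ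
  have hrne : (Finset.range r).Nonempty := ⟨0, Finset.mem_range.2 hr⟩
  have hξdef : xiMin r s wl = (Finset.range r).inf' hrne (fun k => wl k ^ 2 * (s k : ℝ)) := by
    rw [xiMin, dif_pos hrne]
  have hξle : ∀ k < r, xiMin r s wl ≤ wl k ^ 2 * (s k : ℝ) := by
    intro k hk
    rw [hξdef]
    exact Finset.inf'_le _ (Finset.mem_range.2 hk)
  have hξpos : 0 < xiMin r s wl := by
    rw [hξdef]
    obtain ⟨k, hk, heq⟩ := Finset.exists_mem_eq_inf' hrne (fun k => wl k ^ 2 * (s k : ℝ))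
    rw [heq]
    have hk' := Finset.mem_range.1 hk
    have h1 : (0:ℝ) < wl k := hwl k hk'
    have h2 : (0:ℝ) < (s k : ℝ) := by exact_mod_cast hs k hk'
    positivity
  have hζ : xiMin r s wl ≤ zeta r s wl := by
    rw [zeta]
    refine le_trans (hξle 0 hr) ?_
    refine Finset.single_le_sum (f := fun k => wl k ^ 2 * (s k : ℝ)) ?_
      (Finset.mem_range.2 hr)
    intro k hk
    have h1 := (hwl k (Finset.mem_range.1 hk)).le
    have h2 : (0:ℝ) ≤ (s k : ℝ) := by positivity
    positivity
  set X := Real.sqrt (xiMin r s wl) with hXdef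
  set Z := Real.sqrt (zeta r s wl) with hZdef
  have hXpos : 0 < X := Real.sqrt_pos.2 hξpos
  have hZX : X ≤ Z := Real.sqrt_le_sqrt hζ
  have hZpos : 0 < Z := lt_of_lt_of_le hXpos hZX
  set σ := bestApprox r M s w x with hσdef
  set G := wn1 w (x - proj T x) with hGdef
  have hG0 : 0 ≤ G := Finset.sum_nonneg fun i _ => mul_nonneg (hw0 i) (norm_nonneg _)
  have hGσ : G ≤ σ := by
    refine le_csInf ⟨wn1 w (x - 0), 0, sparse_zero, rfl⟩ ?_
    rintro t ⟨z, hz, rfl⟩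
    exact topset_optimal hM hr w wl (fun k hk => (hwl k hk).le) hwlevel x z T hz hTcard hTtop
  have hσ0 : 0 ≤ σ := le_trans hG0 hGσ
  -- bound on the measurements of the tail
  have hAb : n2 (A.mulVec (proj (Finset.univ \ Ξ) x)) ≤ Real.sqrt 2 * (G / X) := by
    refine le_trans (Abound hM hr hδ1 hA hs x Ξ T hΞ.1 hΞ.2 hTsub hTcard) ?_
    refine mul_le_mul_of_nonneg_left ?_ h2pos.le
    rw [hGdef, wn1_sub_proj hM hr w wl hwlevel x T, Finset.sum_div]
    refine Finset.sum_le_sum ?_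
    intro k hk'
    have hk := Finset.mem_range.1 hk'
    have hskpos : (0:ℝ) < (s k : ℝ) := by exact_mod_cast hs k hk
    have hsqs : (0:ℝ) < Real.sqrt (s k) := Real.sqrt_pos.2 hskpos
    have hXle : X ≤ wl k * Real.sqrt (s k) := by
      rw [hXdef]
      calc Real.sqrt (xiMin r s wl) ≤ Real.sqrt (wl k ^ 2 * (s k:ℝ)) :=
            Real.sqrt_le_sqrt (hξle k hk)
        _ = wl k * Real.sqrt (s k) := by
            rw [Real.sqrt_mul (by positivity), Real.sqrt_sq (hwl k hk).le]
    have hsum0 : (0:ℝ) ≤ ∑ i ∈ level N M k \ T, ‖x i‖ :=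
      Finset.sum_nonneg fun i _ => norm_nonneg _
    rw [div_le_div_iff₀ hsqs hXpos]
    calc (∑ i ∈ level N M k \ T, ‖x i‖) * X
        ≤ (∑ i ∈ level N M k \ T, ‖x i‖) * (wl k * Real.sqrt (s k)) :=
          mul_le_mul_of_nonneg_left hXle hsum0
      _ = wl k * (∑ i ∈ level N M k \ T, ‖x i‖) * Real.sqrt (s k) := by ring
  -- split x − x'
  set u := proj Ξ x - x' with hu
  have hxsplit : x - x' = proj (Finset.univ \ Ξ) x + u := by
    funext i
    simp only [hu, Pi.add_apply, Pi.sub_apply, proj, Finset.mem_sdiff, Finset.mem_univ,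
      true_and]
    by_cases hiΞ : i ∈ Ξ
    · simp [hiΞ]
    · simp [hiΞ, sub_eq_add_neg]
  have htri : wn1 w (x - x') ≤ wn1 w (proj (Finset.univ \ Ξ) x) + wn1 w u := by
    rw [hxsplit, wn1, wn1, wn1, ← Finset.sum_add_distrib]
    refine Finset.sum_le_sum fun i _ => ?_
    rw [← mul_add]
    exact mul_le_mul_of_nonneg_left (norm_add_le _ _) (hw0 i)
  have hfirst : wn1 w (proj (Finset.univ \ Ξ) x) ≤ G := by
    rw [hGdef, wn1, wn1]
    refine Finset.sum_le_sum fun i _ => ?_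
    refine mul_le_mul_of_nonneg_left ?_ (hw0 i)
    by_cases hiΞ : i ∈ Ξ
    · have h0 : proj (Finset.univ \ Ξ) x i = 0 := by simp [proj, hiΞ]
      rw [h0]
      simp
    · have hiT : i ∉ T := fun h => hiΞ (hTsub h)
      have e1 : proj (Finset.univ \ Ξ) x i = x i := by simp [proj, hiΞ]
      have e2 : (x - proj T x) i = x i := by simp [proj, hiT]
      rw [e1, e2]
  -- Cauchy–Schwarz in levels for u
  have hsupp : supp u ⊆ Ξ ∪ supp x' := by
    intro i hi
    rw [supp, Finset.mem_filter] at hi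
    by_contra hc
    rw [Finset.mem_union] at hc
    push_neg at hc
    have h1 : i ∉ Ξ := hc.1
    have h2 : x' i = 0 := by
      by_contra h
      exact hc.2 (Finset.mem_filter.2 ⟨Finset.mem_univ i, h⟩)
    exact hi.2 (by simp [hu, proj, h1, h2])
  have hcs : wn1 w u ≤ E * Z * n2 u := by
    have h1 : wn1 w u = ∑ i ∈ supp u, w i * ‖u i‖ := by
      rw [wn1]
      refine (Finset.sum_subset (Finset.subset_univ _) ?_).symm
      intro i _ hi
      have h : u i = 0 := by
        by_contra h
        exact hi (Finset.mem_filter.2 ⟨Finset.mem_univ i, h⟩)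
      simp [h]
    have h2 := Real.sum_mul_le_sqrt_mul_sqrt (supp u) w (fun i => ‖u i‖)
    have h3 : Real.sqrt (∑ i ∈ supp u, ‖u i‖ ^ 2) ≤ n2 u := by
      refine Real.sqrt_le_sqrt ?_
      refine Finset.sum_le_sum_of_subset_of_nonneg (Finset.subset_univ _) ?_
      intro i _ _
      positivity
    have h4 : (∑ i ∈ supp u, w i ^ 2) ≤ (2 + (κ:ℝ)) * zeta r s wl := by
      rw [sum_inter_levels hM hr (supp u) (fun i => w i ^ 2), zeta, Finset.mul_sum]
      refine Finset.sum_le_sum ?_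
      intro k hk'
      have hk := Finset.mem_range.1 hk'
      have hcard : ((supp u ∩ level N M k).card : ℝ) ≤ 2 * s k + κ * s k := by
        have hc1 : supp u ∩ level N M k ⊆ (Ξ ∩ level N M k) ∪ (supp x' ∩ level N M k) := by
          intro i hi
          obtain ⟨hiu, hiL⟩ := Finset.mem_inter.1 hi
          rcases Finset.mem_union.1 (hsupp hiu) with h | h
          · exact Finset.mem_union_left _ (Finset.mem_inter.2 ⟨h, hiL⟩)
          · exact Finset.mem_union_right _ (Finset.mem_inter.2 ⟨h, hiL⟩)
        have hc2 := Finset.card_le_card hc1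
        have hc3 := Finset.card_union_le (Ξ ∩ level N M k) (supp x' ∩ level N M k)
        have hc4 : (Ξ ∩ level N M k).card = min (2 * s k) (level N M k).card := hΞ.1 k hk
        have hc5 : (supp x' ∩ level N M k).card ≤ κ * s k := hx' k hk
        have h6 : (supp u ∩ level N M k).card ≤ 2 * s k + κ * s k := by omega
        exact_mod_cast h6
      have heq : ∑ i ∈ supp u ∩ level N M k, w i ^ 2 =
          ((supp u ∩ level N M k).card : ℝ) * wl k ^ 2 := by
        rw [Finset.sum_congr rfl (fun i hi => by
          rw [hwlevel k hk i (Finset.mem_inter.1 hi).2]), Finset.sum_const, nsmul_eq_mul]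
      rw [heq]
      calc ((supp u ∩ level N M k).card : ℝ) * wl k ^ 2
          ≤ (2 * s k + κ * s k) * wl k ^ 2 := mul_le_mul_of_nonneg_right hcard (sq_nonneg _)
        _ = (2 + (κ:ℝ)) * (wl k ^ 2 * (s k : ℝ)) := by push_cast; ring
    have h5 : Real.sqrt (∑ i ∈ supp u, w i ^ 2) ≤ E * Z := by
      calc Real.sqrt (∑ i ∈ supp u, w i ^ 2)
          ≤ Real.sqrt ((2 + (κ:ℝ)) * zeta r s wl) := Real.sqrt_le_sqrt h4
        _ = E * Z := by rw [hEdef, hZdef, Real.sqrt_mul (by positivity)]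
    calc wn1 w u = ∑ i ∈ supp u, w i * ‖u i‖ := h1
      _ ≤ Real.sqrt (∑ i ∈ supp u, w i ^ 2) * Real.sqrt (∑ i ∈ supp u, ‖u i‖ ^ 2) := h2
      _ ≤ (E * Z) * n2 u := by
          have ha : 0 ≤ Real.sqrt (∑ i ∈ supp u, w i ^ 2) := Real.sqrt_nonneg _
          have hb : 0 ≤ n2 u := n2_nonneg u
          nlinarith [Real.sqrt_nonneg (∑ i ∈ supp u, ‖u i‖ ^ 2)]
  -- the measurement estimate
  have hn2u : n2 u ≤ τ * (Real.sqrt 2 * (G / X) + n2 e) + lam := by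
    refine le_trans hest ?_
    have h1 : n2 (A.mulVec (proj (Finset.univ \ Ξ) x) + e) ≤
        Real.sqrt 2 * (G / X) + n2 e := le_trans (n2_add_le _ _) (by linarith)
    have h2 := mul_le_mul_of_nonneg_left h1 hτ.le
    linarith
  have hn2u0 : 0 ≤ n2 u := n2_nonneg u
  have hwn1u : wn1 w u ≤ E * Z * (τ * (Real.sqrt 2 * (G / X) + n2 e) + lam) := by
    refine le_trans hcs ?_
    exact mul_le_mul_of_nonneg_left hn2u (by positivity)
  -- final arithmetic
  have hq : (1:ℝ) ≤ Z / X := (one_le_div hXpos).2 hZX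
  have key1 : G ≤ Z / X * σ := by
    have h := mul_le_mul_of_nonneg_right hq hσ0
    rw [one_mul] at h
    linarith
  have key2 : E * Z * (τ * (Real.sqrt 2 * (G / X))) ≤
      Real.sqrt 2 * τ * E * (Z / X) * σ := by
    have h : E * Z * (τ * (Real.sqrt 2 * (G / X))) = Real.sqrt 2 * τ * E * (Z / X) * G := by
      ring
    rw [h]
    exact mul_le_mul_of_nonneg_left hGσ (by positivity)
  have hexp : E * Z * (τ * (Real.sqrt 2 * (G / X) + n2 e) + lam) =
      E * Z * (τ * (Real.sqrt 2 * (G / X))) + τ * E * Z * n2 e + E * Z * lam := by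
    ring
  have hfin : (1 + Real.sqrt 2 * τ * E) * (Z / X) * σ =
      Z / X * σ + Real.sqrt 2 * τ * E * (Z / X) * σ := by ring
  calc wn1 w (x - x') ≤ G + wn1 w u := by linarith
    _ ≤ G + (E * Z * (τ * (Real.sqrt 2 * (G / X))) + τ * E * Z * n2 e + E * Z * lam) := by
        rw [← hexp]; linarith
    _ ≤ (1 + Real.sqrt 2 * τ * E) * (Z / X) * σ + τ * E * Z * n2 e + E * Z * lam := by
        rw [hfin]; linarith

end SIL
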